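/- For distinct x, z in C_2 (the span of {A_1 + A_j : 2 ≤ j ≤ N−1}, N even), the restrictions x_r and z_r to the edges incident to any fixed vertex r satisfy x_r ≠ z_r and x_r ≠ z_r + 1, where 1 is the all-ones vector on the N−1 edges incident to r. -/
import Mathlib


open Finset

/-- Index type for edges of the complete graph on `Fin n`: non-diagonal unordered pairs. -/
abbrev EdgeIdx (n : ℕ) := {p : Sym2 (Fin n) // ¬ p.IsDiag}

/-- The GF(2) edge space of the complete graph `K_n`. -/
abbrev EdgeSpace (n : ℕ) := EdgeIdx n → ZMod 2

/-- The basis vector `e_{ij}` of the edge space (zero when `i = j`). -/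
def eVec (n : ℕ) (i j : Fin n) : EdgeSpace n :=
  fun p => if (p : Sym2 (Fin n)) = s(i, j) then 1 else 0

/-- The star vector `A_j := Σ_{l ≠ j} e_{lj}` (the term `l = j` contributes zero). -/
def starVec (n : ℕ) (j : Fin n) : EdgeSpace n := ∑ l : Fin n, eVec n l j

/-- The triangle vector `T_{ijk} := e_{ij} + e_{jk} + e_{ki}`. -/
def triVec (n : ℕ) (i j k : Fin n) : EdgeSpace n := eVec n i j + eVec n j k + eVec n k i

/-- The GF(2) dot product on the edge space. -/
def edot {n : ℕ} (v w : EdgeSpace n) : ZMod 2 := ∑ p : EdgeIdx n, v p * w p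

/-- `C_1 = span{A_1, …, A_{n-1}}` (vertices `0, …, n-2` in 0-indexed notation). -/
def C1 (n : ℕ) : Submodule (ZMod 2) (EdgeSpace n) :=
  Submodule.span (ZMod 2) (starVec n '' {j : Fin n | (j : ℕ) < n - 1})

/-- `C_1^⊥ = span{T_{1jk} : 2 ≤ j < k ≤ n}` (triangles through vertex `0`). -/
def C1perp (n : ℕ) [NeZero n] : Submodule (ZMod 2) (EdgeSpace n) :=
  Submodule.span (ZMod 2)
    {v | ∃ j k : Fin n, j ≠ 0 ∧ k ≠ 0 ∧ j ≠ k ∧ v = triVec n 0 j k}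

/-- `C_2 = span{A_1 + A_j : 2 ≤ j ≤ n-1}` (vertices `1, …, n-2` in 0-indexed notation). -/
def C2 (n : ℕ) [NeZero n] : Submodule (ZMod 2) (EdgeSpace n) :=
  Submodule.span (ZMod 2)
    {v | ∃ j : Fin n, 0 < (j : ℕ) ∧ (j : ℕ) < n - 1 ∧ v = starVec n 0 + starVec n j}

/-- Hamming weight (size of the support). -/
def wt {n : ℕ} (v : EdgeSpace n) : ℕ := (Finset.univ.filter fun p => v p ≠ 0).card

/-- The perfect-matching vector `Σ_{i=1}^{N/2} e_{2i-1, 2i}` (0-indexed: edges `{2i, 2i+1}`). -/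
def matching (N : ℕ) : EdgeSpace N :=
  ∑ i : Fin (N / 2),
    eVec N ⟨2 * i.val, by have := i.isLt; omega⟩ ⟨2 * i.val + 1, by have := i.isLt; omega⟩

/-- Restriction of an edge-space vector to the coordinates of edges incident to vertex `r`;
recorded as the function `k ↦ v(e_{rk})` (with value `0` at `k = r`). -/
def projVec (n : ℕ) (r : Fin n) (v : EdgeSpace n) : Fin n → ZMod 2 :=
  fun k => edot v (eVec n r k)

section AuxLemmas

variable {n : ℕ}

lemma edgeIdx_rep (p : EdgeIdx n) : ∃ i k : Fin n, ∃ h : ¬ (s(i,k)).IsDiag, p = ⟨s(i,k), h⟩ := by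
  obtain ⟨e, he⟩ := p
  induction e using Sym2.ind with
  | _ i k => exact ⟨i, k, he, rfl⟩

lemma edot_eVec (v : EdgeSpace n) {i k : Fin n} (h : i ≠ k) :
    edot v (eVec n i k) = v ⟨s(i,k), by simpa [Sym2.mk_isDiag_iff] using h⟩ := by
  unfold edot eVec
  rw [Finset.sum_eq_single (⟨s(i,k), by simpa [Sym2.mk_isDiag_iff] using h⟩ : EdgeIdx n)]
  · simp
  · intro p _ hp
    rw [if_neg, mul_zero]
    exact fun hq => hp (Subtype.ext hq)
  · simp

lemma edot_eVec_self (v : EdgeSpace n) (i : Fin n) : edot v (eVec n i i) = 0 := by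
  unfold edot eVec
  apply Finset.sum_eq_zero
  intro p _
  rw [if_neg, mul_zero]
  intro hq
  exact p.2 (by rw [hq]; exact Sym2.mk_isDiag_iff.2 rfl)

lemma projVec_ne (r k : Fin n) (v : EdgeSpace n) (h : r ≠ k) :
    projVec n r v k = v ⟨s(r,k), by simpa [Sym2.mk_isDiag_iff] using h⟩ := edot_eVec v h

lemma projVec_self (r : Fin n) (v : EdgeSpace n) : projVec n r v r = 0 := edot_eVec_self v r

lemma projVec_add (r : Fin n) (x z : EdgeSpace n) :
    projVec n r (x + z) = projVec n r x + projVec n r z := by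
  funext k
  simp [projVec, edot, add_mul, Finset.sum_add_distrib]

lemma projVec_smul (r : Fin n) (c : ZMod 2) (x : EdgeSpace n) :
    projVec n r (c • x) = c • projVec n r x := by
  funext k
  simp [projVec, edot, Finset.mul_sum, mul_assoc]

lemma starVec_apply (m i k : Fin n) (h : ¬ (s(i,k)).IsDiag) :
    starVec n m ⟨s(i,k), h⟩ = (if m = i then 1 else 0) + (if m = k then 1 else 0) := by
  have hik : i ≠ k := by simpa [Sym2.mk_isDiag_iff] using h
  unfold starVec eVec
  rw [Finset.sum_apply]
  simp only [Sym2.eq_iff]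
  by_cases h1 : m = i <;> by_cases h2 : m = k
  · exact absurd (h1.symm.trans h2) hik
  · subst h1
    simp [hik, Ne.symm hik, eq_comm (a := k)]
  · subst h2
    simp [hik, Ne.symm hik, eq_comm (a := i)]
  · simp [h1, h2, Ne.symm h1, Ne.symm h2]

lemma star_recon (r m i k : Fin n) (h : ¬ (s(i,k)).IsDiag) :
    starVec n m ⟨s(i,k), h⟩
      = projVec n r (starVec n m) i + projVec n r (starVec n m) k := by
  have hik : i ≠ k := by simpa [Sym2.mk_isDiag_iff] using h
  have key : ∀ t : Fin n, projVec n r (starVec n m) t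
      = if t = r then 0 else (if m = r then 1 else 0) + (if m = t then 1 else 0) := by
    intro t
    by_cases ht : t = r
    · subst ht; simp [projVec_self]
    · rw [if_neg ht, projVec_ne _ _ _ (Ne.symm ht), starVec_apply]
  rw [key, key, starVec_apply _ _ _ h]
  by_cases h1 : i = r <;> by_cases h2 : k = r
  · exact absurd (h1.trans h2.symm) hik
  all_goals simp only [h1, h2, if_pos, if_neg, if_true, if_false]
  · subst h1; split_ifs <;> decide
  · subst h2; split_ifs <;> decide
  · split_ifs <;> decide

lemma C2_recon [NeZero n] (r : Fin n) {v : EdgeSpace n} (hv : v ∈ C2 n) (i k : Fin n)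
    (h : ¬ (s(i,k)).IsDiag) :
    v ⟨s(i,k), h⟩ = projVec n r v i + projVec n r v k := by
  simp only [C2] at hv
  induction hv using Submodule.span_induction with
  | mem w hw =>
    obtain ⟨j, -, -, rfl⟩ := hw
    rw [projVec_add]
    simp only [Pi.add_apply]
    rw [star_recon r 0 i k h, star_recon r j i k h]
    ring
  | zero => simp [projVec, edot]
  | add a b ha hb iha ihb =>
    rw [projVec_add]
    simp only [Pi.add_apply, iha, ihb]
    ring
  | smul c a ha iha =>
    rw [projVec_smul]
    simp only [Pi.smul_apply, iha, smul_eq_mul]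
    ring

lemma sum_star (m : Fin n) :
    ∑ p : EdgeIdx n, starVec n m p = ((n - 1 : ℕ) : ZMod 2) := by
  unfold starVec eVec
  simp only [Finset.sum_apply]
  rw [Finset.sum_comm]
  have key : ∀ l : Fin n,
      (∑ p : EdgeIdx n, if (p : Sym2 (Fin n)) = s(l,m) then (1:ZMod 2) else 0)
      = if l = m then 0 else 1 := by
    intro l
    by_cases hl : l = m
    · subst hl
      rw [if_pos rfl]
      apply Finset.sum_eq_zero
      intro p _
      rw [if_neg]
      intro hq; exact p.2 (by rw [hq]; exact Sym2.mk_isDiag_iff.2 rfl)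
    · rw [if_neg hl]
      rw [Finset.sum_eq_single (⟨s(l,m), by simpa [Sym2.mk_isDiag_iff] using hl⟩ : EdgeIdx n)]
      · simp
      · intro p _ hp; rw [if_neg]; exact fun hq => hp (Subtype.ext hq)
      · simp
  rw [Finset.sum_congr rfl fun l _ => key l]
  rw [← Finset.sum_erase_add _ _ (Finset.mem_univ m), if_pos rfl, add_zero]
  rw [Finset.sum_congr rfl fun l hl => if_neg (Finset.ne_of_mem_erase hl)]
  rw [Finset.sum_const, Finset.card_erase_of_mem (Finset.mem_univ m), Finset.card_univ,
    Fintype.card_fin, nsmul_eq_mul, mul_one]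

lemma C2_sum_zero [NeZero n] {v : EdgeSpace n} (hv : v ∈ C2 n) :
    ∑ p : EdgeIdx n, v p = 0 := by
  simp only [C2] at hv
  induction hv using Submodule.span_induction with
  | mem w hw =>
    obtain ⟨j, -, -, rfl⟩ := hw
    simp only [Pi.add_apply, Finset.sum_add_distrib, sum_star]
    exact CharTwo.add_self_eq_zero _
  | zero => simp
  | add a b ha hb iha ihb =>
    simp [Finset.sum_add_distrib, iha, ihb]
  | smul c a ha iha =>
    simp only [Pi.smul_apply, smul_eq_mul]
    rw [← Finset.mul_sum, iha, mul_zero]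

end AuxLemmas

/-- For distinct `x, z ∈ C_2` (`N` even), their restrictions `x_r`, `z_r` to the edges
incident to any fixed vertex `r` satisfy `x_r ≠ z_r` and `x_r ≠ z_r + 1`, where `1` is
the all-ones vector on the `N-1` edges incident to `r`. -/
theorem C2_restrictions_distinguishable (N : ℕ) [NeZero N] (hN : 4 ≤ N) (hEven : Even N)
    (r : Fin N) (x z : EdgeSpace N) (hx : x ∈ C2 N) (hz : z ∈ C2 N) (hne : x ≠ z) :
    projVec N r x ≠ projVec N r z ∧
    projVec N r x ≠ projVec N r z + (fun k => if k = r then 0 else 1) := by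
  constructor
  · intro hEq
    apply hne
    funext p
    obtain ⟨i, k, hik, rfl⟩ := edgeIdx_rep p
    rw [C2_recon r hx i k hik, C2_recon r hz i k hik, hEq]
  · intro hEq
    have hs : ∀ t : Fin N, (if r = t then (1:ZMod 2) else 0) = if t = r then 1 else 0 := by
      intro t
      by_cases h : t = r
      · simp [h]
      · simp [h, (Ne.symm h : ¬ r = t)]
    have hxz : ∀ p : EdgeIdx N, x p = z p + starVec N r p := by
      intro p
      obtain ⟨i, k, hik, rfl⟩ := edgeIdx_rep p
      rw [C2_recon r hx i k hik, C2_recon r hz i k hik, hEq, starVec_apply, hs, hs]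
      simp only [Pi.add_apply]
      generalize projVec N r z i = a
      generalize projVec N r z k = b
      split_ifs <;> revert a b <;> decide
    have h1 : (0:ZMod 2) = ((N - 1 : ℕ) : ZMod 2) := by
      calc (0:ZMod 2) = ∑ p : EdgeIdx N, x p := (C2_sum_zero hx).symm
        _ = ∑ p : EdgeIdx N, (z p + starVec N r p) :=
            Finset.sum_congr rfl fun p _ => hxz p
        _ = (∑ p : EdgeIdx N, z p) + ∑ p : EdgeIdx N, starVec N r p :=
            Finset.sum_add_distrib
        _ = ((N - 1 : ℕ) : ZMod 2) := by rw [C2_sum_zero hz, sum_star, zero_add]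
    obtain ⟨m, hm⟩ := hEven
    have hmod : (N - 1) % 2 = 1 := by omega
    exact absurd h1 (by rw [← ZMod.natCast_mod (N-1) 2, hmod, Nat.cast_one]; decide)
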